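/- Suppose ε > 0, let xy be an edge of T with x ∈ W_1 and y ∈ U_1 \ W_1, and let I' be the instance obtained from I by expanding the edge xy by ε. If (s_1,…,s_k) is a solution of I, then (s_1,…,s_k) is also a solution of I'. -/

import Mathlib

/-!
Cutting the edge `xy` splits the tree into the side `X` of `x` and the side of `y`. In the
expanded tree, distances between vertices on the same side are unchanged, distances across the
edge grow by `ε`, and the new vertex `y'` is at distance `d(·, y)` from `X` and `d(·, y) + ε`
from the other side, so it behaves like a vertex of `X` placed at `y`.

Since `x` lies only in the cell of `s₁`, the site `s₁` lies in `X` and is strictly closer than any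
other site `s` to every vertex on the side opposite to `s`; in particular every cell other than
`U₁` lies on the side of its site. A site `s_j ≠ s₁` whose cell contains `y` lies on the side of
`y` and ties with `s₁` at `y`, so it is at least as close as `s₁` to every vertex on that side.
Thus every vertex has a nearest site on its own side, and adding `ε` to the distances of the sites
across the edge discards exactly the nearest sites across it: every cell but `U₁` is unchanged,
while `U₁` loses its part on the side of `y` and gains `y'`.
-/

open SimpleGraph Walk Sum

def voronoiCell {α ι : Type*} (d : α → α → ℝ) (s : ι → α) (i : ι) : Set α :=
  {v | ∀ j, d (s i) v ≤ d (s j) v}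

theorem dist_lt_of_mem_voronoiCell_of_notMem {α ι : Type*} {d : α → α → ℝ} {s : ι → α}
    {i j : ι} {v : α} (hi : v ∈ voronoiCell d s i) (hj : v ∉ voronoiCell d s j) :
    d (s i) v < d (s j) v := by
  simp only [voronoiCell, Set.mem_ofPred_eq, not_forall, not_le] at hj
  obtain ⟨m, hm⟩ := hj
  exact (hi m).trans_lt hm

theorem forall_le_iff_forall_le_and_mem {ι : Type*} {f g : ι → ℝ} {A : Set ι} {ε : ℝ}
    (hε : 0 < ε) (hgA : ∀ j ∈ A, g j = f j) (hgAc : ∀ j ∉ A, g j = f j + ε) {a : ι}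
    (ha : a ∈ A) (haf : ∀ b ∉ A, f a ≤ f b) (i : ι) :
    (∀ j, g i ≤ g j) ↔ (∀ j, f i ≤ f j) ∧ i ∈ A := by
  constructor
  · intro h
    have hi : i ∈ A := by
      by_contra hi
      have hia := h a
      rw [hgAc i hi, hgA a ha] at hia
      linarith [haf i hi]
    refine ⟨fun j => ?_, hi⟩
    by_cases hj : j ∈ A
    · simpa only [hgA i hi, hgA j hj] using h j
    · calc f i = g i := (hgA i hi).symm
        _ ≤ g a := h a
        _ = f a := hgA a ha
        _ ≤ f j := haf j hj
  · rintro ⟨h, hi⟩ j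
    rw [hgA i hi]
    by_cases hj : j ∈ A
    · exact (h j).trans_eq (hgA j hj).symm
    · linarith [h j, hgAc j hj]

namespace SimpleGraph

variable {V : Type*} {G : SimpleGraph V} {u v x y : V}

theorem Walk.IsPath.append_of_disjoint {z : V} {p : G.Walk u v} {q : G.Walk v z}
    (hp : p.IsPath) (hq : q.IsPath) (h : p.support.Disjoint q.support.tail) :
    (p.append q).IsPath := by
  rw [isPath_def, support_append]
  exact hp.support_nodup.append (hq.support_nodup.sublist (List.tail_sublist _)) h

def IsPathDist (G : SimpleGraph V) (w : Sym2 V → ℝ) (d : V → V → ℝ) : Prop :=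
  ∀ (u v : V) (p : G.Walk u v), p.IsPath → (p.edges.map w).sum = d u v

namespace IsPathDist

variable {w : Sym2 V → ℝ} {d : V → V → ℝ} (hd : G.IsPathDist w d)
include hd

theorem symm_of_isPath {p : G.Walk u v} (hp : p.IsPath) : d v u = d u v := by
  rw [← hd u v p hp, ← hd v u p.reverse hp.reverse, edges_reverse, List.map_reverse,
    List.sum_reverse]

theorem symm (hG : G.Preconnected) (u v : V) : d u v = d v u :=
  let ⟨_, hp⟩ := (hG u v).exists_isPath
  (hd.symm_of_isPath hp).symm

theorem eq_of_adj (h : G.Adj u v) : d u v = w s(u, v) := by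
  simpa using (hd u v _ (IsPath.nil.cons (by simpa using h.ne) (h := h))).symm

theorem eq_add_of_mem_support {p : G.Walk u v} (hp : p.IsPath) {c : V} (hc : c ∈ p.support) :
    d u v = d u c + d c v := by
  classical
  rw [← hd _ _ _ hp, ← hd _ _ _ (hp.takeUntil hc), ← hd _ _ _ (hp.dropUntil hc)]
  conv_lhs => rw [← p.take_spec hc]
  rw [edges_append, List.map_append, List.sum_append]

theorem le_sum_map_edges (hw : ∀ e ∈ G.edgeSet, 0 ≤ w e) (p : G.Walk u v) :
    d u v ≤ (p.edges.map w).sum := by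
  classical
  obtain ⟨l, hperm, hsub⟩ :=
    p.bypass_isPath.isTrail.edges_nodup.subperm p.edges_bypass_subset_edges
  rw [← hd u v _ p.bypass_isPath, ← (hperm.map w).sum_eq]
  exact (hsub.map w).sum_le_sum
    (List.forall_mem_map.2 fun e he => hw e (p.edges_subset_edgeSet he))

theorem triangle (hG : G.Preconnected) (hw : ∀ e ∈ G.edgeSet, 0 ≤ w e) (u c v : V) :
    d u v ≤ d u c + d c v := by
  obtain ⟨p, hp⟩ := (hG u c).exists_isPath
  obtain ⟨q, hq⟩ := (hG c v).exists_isPath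
  calc d u v ≤ ((p.append q).edges.map w).sum := hd.le_sum_map_edges hw _
    _ = d u c + d c v := by
      rw [edges_append, List.map_append, List.sum_append, hd _ _ _ hp, hd _ _ _ hq]

end IsPathDist

/-- For an edge `xy` of a tree: the vertices of the component of `G - y` containing `x`. -/
def edgeSide (G : SimpleGraph V) (x y : V) : Set V :=
  {u | ∀ p : G.Walk u x, p.IsPath → y ∉ p.support}

namespace IsTree

variable (hT : G.IsTree)
include hT

theorem mem_edgeSide_iff {p : G.Walk u x} (hp : p.IsPath) : u ∈ G.edgeSide x y ↔ y ∉ p.support :=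
  ⟨fun h => h p hp, fun h q hq => by rwa [(hT.existsUnique_path u x).unique hq hp]⟩

theorem exists_isPath_of_mem_edgeSide (hu : u ∈ G.edgeSide x y) :
    ∃ p : G.Walk u x, p.IsPath ∧ y ∉ p.support :=
  let ⟨p, hp, _⟩ := hT.existsUnique_path u x
  ⟨p, hp, hu p hp⟩

theorem right_notMem_edgeSide : y ∉ G.edgeSide x y := fun h =>
  let ⟨p, hp, _⟩ := hT.existsUnique_path y x
  h p hp p.start_mem_support

theorem notMem_edgeSide_iff (hxy : G.Adj x y) : u ∉ G.edgeSide x y ↔ u ∈ G.edgeSide y x := by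
  classical
  obtain ⟨p, hp, -⟩ := hT.existsUnique_path u x
  constructor
  · intro hu
    rw [hT.mem_edgeSide_iff hp, not_not] at hu
    exact (hT.mem_edgeSide_iff (hp.takeUntil hu)).2
      (endpoint_notMem_support_takeUntil hp hu hxy.ne)
  · intro hu hu'
    obtain ⟨q, hq, hxq⟩ := hT.exists_isPath_of_mem_edgeSide hu
    exact (hT.mem_edgeSide_iff (hq.concat hxq hxy.symm)).1 hu' (by simp)

theorem support_subset_edgeSide {p : G.Walk u x} (hp : p.IsPath) (hy : y ∉ p.support) :
    ∀ a ∈ p.support, a ∈ G.edgeSide x y := by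
  classical
  exact fun a ha => (hT.mem_edgeSide_iff (hp.dropUntil ha)).2 fun h =>
    hy (p.support_dropUntil_subset_support ha h)

theorem notMem_support_of_mem_edgeSide (hu : u ∈ G.edgeSide x y) (hv : v ∈ G.edgeSide x y)
    {p : G.Walk u v} (hp : p.IsPath) : y ∉ p.support := by
  classical
  obtain ⟨p₁, -, hy₁⟩ := hT.exists_isPath_of_mem_edgeSide hu
  obtain ⟨p₂, -, hy₂⟩ := hT.exists_isPath_of_mem_edgeSide hv
  rw [(hT.existsUnique_path u v).unique hp (p₁.append p₂.reverse).bypass_isPath]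
  intro h
  have := (p₁.append p₂.reverse).support_bypass_subset_support h
  simp only [mem_support_append_iff, support_reverse, List.mem_reverse] at this
  tauto

theorem exists_isPath_across (hxy : G.Adj x y) (hu : u ∈ G.edgeSide x y)
    (hv : v ∉ G.edgeSide x y) :
    ∃ (p : G.Walk u x) (q : G.Walk y v), p.IsPath ∧ q.IsPath ∧ y ∉ p.support ∧
      x ∉ q.support ∧ p.support.Disjoint q.support := by
  obtain ⟨p, hp, hyp⟩ := hT.exists_isPath_of_mem_edgeSide hu
  obtain ⟨q, hq, hxq⟩ :=
    hT.exists_isPath_of_mem_edgeSide ((hT.notMem_edgeSide_iff hxy).1 hv)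
  refine ⟨p, q.reverse, hp, hq.reverse, hyp, by simpa using hxq, fun a hap haq => ?_⟩
  rw [support_reverse, List.mem_reverse] at haq
  exact (hT.notMem_edgeSide_iff hxy).2 (hT.support_subset_edgeSide hq hxq a haq)
    (hT.support_subset_edgeSide hp hyp a hap)

variable {w : Sym2 V → ℝ} {d : V → V → ℝ} (hd : G.IsPathDist w d) (hxy : G.Adj x y)
include hd hxy

theorem dist_eq_add_of_mem_edgeSide (hu : u ∈ G.edgeSide x y) : d u y = d u x + w s(x, y) := by
  obtain ⟨p, hp, hyp⟩ := hT.exists_isPath_of_mem_edgeSide hu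
  rw [← hd _ _ _ (hp.concat hyp hxy), ← hd _ _ _ hp, edges_concat, List.concat_eq_append,
    List.map_append, List.sum_append, List.map_singleton, List.sum_singleton]

theorem dist_eq_add_of_notMem_edgeSide (hu : u ∉ G.edgeSide x y) :
    d u x = d u y + w s(x, y) := by
  rw [hT.notMem_edgeSide_iff hxy] at hu
  rw [hT.dist_eq_add_of_mem_edgeSide hd hxy.symm hu, Sym2.eq_swap]

theorem dist_eq_add_of_mem_of_notMem (hu : u ∈ G.edgeSide x y) (hv : v ∉ G.edgeSide x y) :
    d u v = d u y + d y v := by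
  obtain ⟨p, q, hp, hq, -, hxq, hpq⟩ := hT.exists_isPath_across hxy hu hv
  have hpath : (p.append (cons hxy q)).IsPath :=
    hp.append_of_disjoint (hq.cons hxq) (by simpa using hpq)
  exact hd.eq_add_of_mem_support hpath (by simp)

end IsTree

/-- The expansion of the edge `xy` by `ε`, with `inr ()` as the subdivision vertex `y'`. -/
structure IsEdgeExpansion (T : SimpleGraph V) (w : Sym2 V → ℝ) (x y : V) (ε : ℝ)
    (T' : SimpleGraph (V ⊕ Unit)) (w' : Sym2 (V ⊕ Unit) → ℝ) : Prop where
  adj_iff : ∀ a b : V ⊕ Unit, T'.Adj a b ↔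
    ((∃ u v : V, a = inl u ∧ b = inl v ∧ T.Adj u v ∧ s(u, v) ≠ s(x, y)) ∨
      (a = inl x ∧ b = inr ()) ∨ (a = inr () ∧ b = inl x) ∨
      (a = inl y ∧ b = inr ()) ∨ (a = inr () ∧ b = inl y))
  weight_inl : ∀ u v : V, w' s(inl u, inl v) = w s(u, v)
  weight_left : w' s(inl x, inr ()) = w s(x, y)
  weight_right : w' s(inl y, inr ()) = ε

namespace IsEdgeExpansion

variable {T : SimpleGraph V} {w : Sym2 V → ℝ} {x y u v : V} {ε : ℝ}
  {T' : SimpleGraph (V ⊕ Unit)} {w' : Sym2 (V ⊕ Unit) → ℝ} (hE : IsEdgeExpansion T w x y ε T' w')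
include hE

theorem adj_left : T'.Adj (inl x) (inr ()) := (hE.adj_iff _ _).2 (by simp)

theorem adj_right : T'.Adj (inl y) (inr ()) := (hE.adj_iff _ _).2 (by simp)

theorem sum_map_weight_inl (l : List (Sym2 V)) :
    ((l.map (Sym2.map inl)).map w').sum = (l.map w).sum := by
  induction l with
  | nil => rfl
  | cons e l ih =>
    induction e using Sym2.ind with
    | _ a b => simp only [List.map_cons, List.sum_cons, ih, Sym2.map_mk, hE.weight_inl]

theorem exists_lift {p : T.Walk u v} (hp : p.IsPath) (he : s(x, y) ∉ p.edges) :
    ∃ q : T'.Walk (inl u) (inl v), q.IsPath ∧ q.support = p.support.map inl ∧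
      (q.edges.map w').sum = (p.edges.map w).sum := by
  have hpe : ∀ e ∈ p.edges, e ∈ (T.deleteEdges {s(x, y)}).edgeSet := fun e hep => by
    rw [edgeSet_deleteEdges]
    exact ⟨p.edges_subset_edgeSet hep, fun h => he (h ▸ hep)⟩
  let φ : T.deleteEdges {s(x, y)} →g T' :=
    ⟨inl, fun {a b} hab => (hE.adj_iff _ _).2 (Or.inl ⟨a, b, rfl, rfl, by simpa using hab⟩)⟩
  refine ⟨(p.transfer _ hpe).map φ, (hp.transfer hpe).map inl_injective,
    by simp [φ], ?_⟩
  rw [edges_map, edges_transfer]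
  exact hE.sum_map_weight_inl _

variable {d : V → V → ℝ} {d' : V ⊕ Unit → V ⊕ Unit → ℝ} (hd : T.IsPathDist w d)
  (hd' : T'.IsPathDist w' d') (hT : T.IsTree) (hxy : T.Adj x y)

include hd' in
theorem dist_inr_of_isPath {z : V} (hz : T'.Adj (inl z) (inr ())) {p : T.Walk u z}
    (hp : p.IsPath) (he : s(x, y) ∉ p.edges) :
    d' (inl u) (inr ()) = (p.edges.map w).sum + w' s(inl z, inr ()) := by
  obtain ⟨q, hq, hqs, hqw⟩ := hE.exists_lift hp he
  rw [← hd' _ _ _ (hq.concat (by simp [hqs]) hz), edges_concat, List.concat_eq_append,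
    List.map_append, List.sum_append, hqw, List.map_singleton, List.sum_singleton]

include hd hT hxy

theorem exists_isPath_of_mem_of_notMem (hu : u ∈ T.edgeSide x y) (hv : v ∉ T.edgeSide x y) :
    ∃ q : T'.Walk (inl u) (inl v), q.IsPath ∧ (q.edges.map w').sum = d u v + ε := by
  obtain ⟨p, q, hp, hq, hyp, hxq, hpq⟩ := hT.exists_isPath_across hxy hu hv
  obtain ⟨p', hp', hp's, hp'w⟩ :=
    hE.exists_lift hp fun h => hyp (p.snd_mem_support_of_mem_edges h)
  obtain ⟨q', hq', hq's, hq'w⟩ :=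
    hE.exists_lift hq fun h => hxq (q.fst_mem_support_of_mem_edges h)
  refine ⟨p'.append (cons hE.adj_left (cons hE.adj_right.symm q')), ?_, ?_⟩
  · refine hp'.append_of_disjoint ((hq'.cons (by simp [hq's])).cons (by simp [hq's, hxq])) ?_
    simpa [hp's, hq's] using List.disjoint_map inl_injective hpq
  · rw [edges_append, List.map_append, List.sum_append, edges_cons, edges_cons, List.map_cons,
      List.map_cons, List.sum_cons, List.sum_cons, hp'w, hq'w, hd _ _ _ hp, hd _ _ _ hq,
      hE.weight_left, Sym2.eq_swap (a := inr ()), hE.weight_right,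
      hT.dist_eq_add_of_mem_of_notMem hd hxy hu hv, hT.dist_eq_add_of_mem_edgeSide hd hxy hu]
    ring

include hd'

theorem dist_inl_of_iff (huv : u ∈ T.edgeSide x y ↔ v ∈ T.edgeSide x y) :
    d' (inl u) (inl v) = d u v := by
  obtain ⟨p, hp, -⟩ := hT.existsUnique_path u v
  have he : s(x, y) ∉ p.edges := by
    by_cases hu : u ∈ T.edgeSide x y
    · exact fun h => hT.notMem_support_of_mem_edgeSide hu (huv.1 hu) hp
        (p.snd_mem_support_of_mem_edges h)
    · have hv := (hT.notMem_edgeSide_iff hxy).1 (huv.not.1 hu)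
      rw [hT.notMem_edgeSide_iff hxy] at hu
      exact fun h => hT.notMem_support_of_mem_edgeSide hu hv hp
        (p.fst_mem_support_of_mem_edges h)
  obtain ⟨q, hq, -, hqw⟩ := hE.exists_lift hp he
  rw [← hd' _ _ _ hq, hqw, hd _ _ _ hp]

theorem dist_inl_of_not_iff (huv : ¬(u ∈ T.edgeSide x y ↔ v ∈ T.edgeSide x y)) :
    d' (inl u) (inl v) = d u v + ε := by
  by_cases hu : u ∈ T.edgeSide x y
  · obtain ⟨q, hq, hqw⟩ := hE.exists_isPath_of_mem_of_notMem hd hT hxy (v := v) hu (by tauto)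
    rw [← hd' _ _ _ hq, hqw]
  · obtain ⟨q, hq, hqw⟩ :=
      hE.exists_isPath_of_mem_of_notMem hd hT hxy (u := v) (v := u) (by tauto) hu
    rw [hd'.symm_of_isPath hq, ← hd' _ _ _ hq, hqw, hd.symm hT.connected.preconnected]

theorem dist_inr_of_mem (hu : u ∈ T.edgeSide x y) : d' (inl u) (inr ()) = d u y := by
  obtain ⟨p, hp, hyp⟩ := hT.exists_isPath_of_mem_edgeSide hu
  rw [hE.dist_inr_of_isPath hd' hE.adj_left hp
    fun h => hyp (p.snd_mem_support_of_mem_edges h), hd _ _ _ hp, hE.weight_left,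
    hT.dist_eq_add_of_mem_edgeSide hd hxy hu]

theorem dist_inr_of_notMem (hu : u ∉ T.edgeSide x y) : d' (inl u) (inr ()) = d u y + ε := by
  obtain ⟨p, hp, hxp⟩ := hT.exists_isPath_of_mem_edgeSide ((hT.notMem_edgeSide_iff hxy).1 hu)
  rw [hE.dist_inr_of_isPath hd' hE.adj_right hp
    fun h => hxp (p.fst_mem_support_of_mem_edges h), hd _ _ _ hp, hE.weight_right]

end IsEdgeExpansion

end SimpleGraph

namespace SimpleGraph.IsTree

variable {V ι : Type*} {T : SimpleGraph V} {w : Sym2 V → ℝ} {d : V → V → ℝ} {x y : V}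
  {s : ι → V} {i₀ j₁ : ι} (hT : T.IsTree) (hw : ∀ e ∈ T.edgeSet, 0 ≤ w e)
  (hd : T.IsPathDist w d) (hxy : T.Adj x y)
include hT hw hd hxy

theorem dist_le_of_notMem_edgeSide (h₀ : s i₀ ∈ T.edgeSide x y)
    (hy : y ∈ voronoiCell d s j₁) {v : V} (hv : v ∉ T.edgeSide x y) :
    d (s j₁) v ≤ d (s i₀) v := by
  rw [hT.dist_eq_add_of_mem_of_notMem hd hxy h₀ hv]
  linarith [hd.triangle hT.connected.preconnected hw (s j₁) y v, hy i₀]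

variable (hx : ∀ j ≠ i₀, d (s i₀) x < d (s j) x)
include hx

theorem site_mem_edgeSide (hy : y ∈ voronoiCell d s j₁) (hj₁ : j₁ ≠ i₀) :
    s i₀ ∈ T.edgeSide x y := by
  by_contra h
  have hyx : d y x = w s(x, y) := by rw [hd.eq_of_adj hxy.symm, Sym2.eq_swap]
  linarith [hT.dist_eq_add_of_notMem_edgeSide hd hxy h, hy i₀, hx j₁ hj₁,
    hd.triangle hT.connected.preconnected hw (s j₁) y x]

theorem dist_lt_of_mem_edgeSide_iff_notMem (h₀ : s i₀ ∈ T.edgeSide x y) {j : ι} (hj : j ≠ i₀)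
    {v : V} (hjv : s j ∈ T.edgeSide x y ↔ v ∉ T.edgeSide x y) : d (s i₀) v < d (s j) v := by
  by_cases hv : v ∈ T.edgeSide x y
  · have hsj : s j ∈ T.edgeSide y x := (hT.notMem_edgeSide_iff hxy).1 (hjv.not.2 (not_not.2 hv))
    have hv' : v ∉ T.edgeSide y x := (hT.notMem_edgeSide_iff hxy.symm).2 hv
    linarith [hT.dist_eq_add_of_mem_of_notMem hd hxy.symm hsj hv', hx j hj,
      hd.triangle hT.connected.preconnected hw (s i₀) x v]
  · have hsj := hjv.2 hv
    linarith [hT.dist_eq_add_of_mem_of_notMem hd hxy hsj hv,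
      hT.dist_eq_add_of_mem_of_notMem hd hxy h₀ hv, hT.dist_eq_add_of_mem_edgeSide hd hxy hsj,
      hT.dist_eq_add_of_mem_edgeSide hd hxy h₀, hx j hj]

theorem mem_edgeSide_iff_of_mem_voronoiCell (h₀ : s i₀ ∈ T.edgeSide x y) {i : ι} (hi : i ≠ i₀)
    {v : V} (hv : v ∈ voronoiCell d s i) : s i ∈ T.edgeSide x y ↔ v ∈ T.edgeSide x y := by
  by_contra h
  exact (hT.dist_lt_of_mem_edgeSide_iff_notMem hw hd hxy hx h₀ hi (by tauto)).not_ge (hv i₀)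

end SimpleGraph.IsTree

namespace SimpleGraph.IsEdgeExpansion

variable {V ι : Type*} {T : SimpleGraph V} {w : Sym2 V → ℝ} {d : V → V → ℝ} {x y : V} {ε : ℝ}
  {T' : SimpleGraph (V ⊕ Unit)} {w' : Sym2 (V ⊕ Unit) → ℝ} {d' : V ⊕ Unit → V ⊕ Unit → ℝ}
  {s : ι → V} {i₀ : ι} (hE : IsEdgeExpansion T w x y ε T' w') (hd : T.IsPathDist w d)
  (hd' : T'.IsPathDist w' d') (hT : T.IsTree) (hw : ∀ e ∈ T.edgeSet, 0 ≤ w e) (hxy : T.Adj x y)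
  (hx : ∀ j ≠ i₀, d (s i₀) x < d (s j) x) (hε : 0 < ε) (h₀ : s i₀ ∈ T.edgeSide x y)
include hE hd hd' hT hw hxy hx hε h₀

theorem inl_mem_voronoiCell_iff {j₁ : ι} (hy : y ∈ voronoiCell d s j₁) (hj₁ : j₁ ≠ i₀) (v : V)
    (i : ι) : inl v ∈ voronoiCell d' (inl ∘ s) i ↔
      v ∈ voronoiCell d s i ∧ (s i ∈ T.edgeSide x y ↔ v ∈ T.edgeSide x y) := by
  obtain ⟨a, haA, ha⟩ : ∃ a, (s a ∈ T.edgeSide x y ↔ v ∈ T.edgeSide x y) ∧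
      d (s a) v ≤ d (s i₀) v := by
    by_cases hv : v ∈ T.edgeSide x y
    · exact ⟨i₀, iff_of_true h₀ hv, le_rfl⟩
    · have hsj₁ : s j₁ ∉ T.edgeSide x y := fun h =>
        hT.right_notMem_edgeSide
          ((hT.mem_edgeSide_iff_of_mem_voronoiCell hw hd hxy hx h₀ hj₁ hy).1 h)
      exact ⟨j₁, iff_of_false hsj₁ hv, hT.dist_le_of_notMem_edgeSide hw hd hxy h₀ hy hv⟩
  refine forall_le_iff_forall_le_and_mem (f := fun j => d (s j) v)
    (g := fun j => d' (inl (s j)) (inl v)) (A := {j | s j ∈ T.edgeSide x y ↔ v ∈ T.edgeSide x y})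
    hε (fun j hj => hE.dist_inl_of_iff hd hd' hT hxy hj)
    (fun j hj => hE.dist_inl_of_not_iff hd hd' hT hxy hj) haA (fun b hbA => ha.trans ?_) i
  rcases eq_or_ne b i₀ with rfl | hb
  · exact le_rfl
  · have hbA : ¬(s b ∈ T.edgeSide x y ↔ v ∈ T.edgeSide x y) := hbA
    exact (hT.dist_lt_of_mem_edgeSide_iff_notMem hw hd hxy hx h₀ hb (by tauto)).le

theorem inr_mem_voronoiCell_iff (hy : y ∈ voronoiCell d s i₀) (i : ι) :
    inr () ∈ voronoiCell d' (inl ∘ s) i ↔ i = i₀ := by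
  refine (forall_le_iff_forall_le_and_mem (f := fun j => d (s j) y)
    (g := fun j => d' (inl (s j)) (inr ())) (A := {j | s j ∈ T.edgeSide x y})
    hε (fun j hj => hE.dist_inr_of_mem hd hd' hT hxy hj)
    (fun j hj => hE.dist_inr_of_notMem hd hd' hT hxy hj) h₀ (fun b _ => hy b) i).trans ⟨?_, ?_⟩
  · rintro ⟨hi, hsi⟩
    by_contra hne
    exact (hT.dist_lt_of_mem_edgeSide_iff_notMem hw hd hxy hx h₀ hne
      (iff_of_true hsi hT.right_notMem_edgeSide)).not_ge (hi i₀)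
  · rintro rfl
    exact ⟨hy, h₀⟩

end SimpleGraph.IsEdgeExpansion

theorem expansion_preserves_solution_general
    {V : Type*} (T : SimpleGraph V) (hT : T.IsTree)
    (w : Sym2 V → ℝ) (hw : ∀ e ∈ T.edgeSet, 0 < w e)
    (d : V → V → ℝ)
    (hd : ∀ (u v : V) (p : T.Walk u v), p.IsPath → (p.edges.map w).sum = d u v)
    (k : ℕ) (U S : Fin k → Set V)
    (i₀ : Fin k) (x y : V) (hxy : T.Adj x y)
    (hx : x ∈ U i₀ \ ⋃ (j) (_ : j ≠ i₀), U j)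
    (hyU : y ∈ U i₀) (hyW : y ∉ U i₀ \ ⋃ (j) (_ : j ≠ i₀), U j)
    (ε : ℝ) (hε : 0 < ε)
    -- the expanded tree `T'`
    (T' : SimpleGraph (V ⊕ Unit))
    (hT'adj : ∀ a b : V ⊕ Unit, T'.Adj a b ↔
      ((∃ u v : V, a = Sum.inl u ∧ b = Sum.inl v ∧ T.Adj u v ∧ s(u, v) ≠ s(x, y)) ∨
        (a = Sum.inl x ∧ b = Sum.inr ()) ∨ (a = Sum.inr () ∧ b = Sum.inl x) ∨
        (a = Sum.inl y ∧ b = Sum.inr ()) ∨ (a = Sum.inr () ∧ b = Sum.inl y)))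
    -- its edge-lengths
    (w' : Sym2 (V ⊕ Unit) → ℝ)
    (hw'old : ∀ u v : V, w' s(Sum.inl u, Sum.inl v) = w s(u, v))
    (hw'x : w' s(Sum.inl x, Sum.inr ()) = w s(x, y))
    (hw'y : w' s(Sum.inl y, Sum.inr ()) = ε)
    -- its tree distance
    (d' : V ⊕ Unit → V ⊕ Unit → ℝ)
    (hd' : ∀ (a b : V ⊕ Unit) (p : T'.Walk a b), p.IsPath → (p.edges.map w').sum = d' a b)
    -- the modified cell `U'₁`
    (U₁' : Set (V ⊕ Unit))
    (hU₁' : U₁' = {Sum.inr ()} ∪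
      Sum.inl '' {u | u ∈ U i₀ ∧ ∀ p : T.Walk u x, p.IsPath → y ∉ p.support})
    -- a solution of the original instance `I`
    (st : Fin k → V)
    (hsol : ∀ i, st i ∈ S i ∧ {v | ∀ j, d (st i) v ≤ d (st j) v} = U i) :
    ∀ i, (Sum.inl (st i) : V ⊕ Unit) ∈ (Sum.inl '' S i : Set (V ⊕ Unit)) ∧
      {a : V ⊕ Unit | ∀ j, d' (Sum.inl (st i)) a ≤ d' (Sum.inl (st j)) a} =
        (if i = i₀ then U₁' else (Sum.inl '' U i : Set (V ⊕ Unit))) := by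
  have hE : IsEdgeExpansion T w x y ε T' w' := ⟨hT'adj, hw'old, hw'x, hw'y⟩
  have hw₀ : ∀ e ∈ T.edgeSet, 0 ≤ w e := fun e he => (hw e he).le
  obtain rfl : U = voronoiCell d st := funext fun i => (hsol i).2.symm
  have hx₀ : ∀ j ≠ i₀, d (st i₀) x < d (st j) x := fun j hj =>
    dist_lt_of_mem_voronoiCell_of_notMem hx.1 fun h => hx.2 (Set.mem_biUnion hj h)
  obtain ⟨j₁, hj₁, hy₁⟩ : ∃ j ≠ i₀, y ∈ voronoiCell d st j := by simpa [hyU] using hyW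
  have h₀ : st i₀ ∈ T.edgeSide x y := hT.site_mem_edgeSide hw₀ hd hxy hx₀ hy₁ hj₁
  intro i
  refine ⟨⟨st i, (hsol i).1, rfl⟩, ?_⟩
  change voronoiCell d' (Sum.inl ∘ st) i = _
  ext (v | ⟨⟩)
  · rw [hE.inl_mem_voronoiCell_iff hd hd' hT hw₀ hxy hx₀ hε h₀ hy₁ hj₁]
    split_ifs with hi
    · subst hi
      rw [iff_true_left h₀]
      simp only [hU₁', Set.mem_union, Set.mem_singleton_iff, reduceCtorEq, false_or,
        inl_injective.mem_set_image]
      rfl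
    · rw [inl_injective.mem_set_image]
      exact and_iff_left_of_imp fun hv =>
        hT.mem_edgeSide_iff_of_mem_voronoiCell hw₀ hd hxy hx₀ h₀ hi hv
  · rw [hE.inr_mem_voronoiCell_iff hd hd' hT hw₀ hxy hx₀ hε h₀ hyU]
    split_ifs with hi <;> simp [hU₁', hi]

/-- Expanding an edge `xy` (with `x ∈ W₁`, `y ∈ U₁ \ W₁`) of a tree instance of the
Generalized Graphic Inverse Voronoi problem by `ε > 0`: any solution of the original
instance `I` is also a solution of the expanded instance `I'`.

The expanded tree `T'` lives on `V ⊕ Unit`, where `Sum.inr ()` is the subdivision vertex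
`y'`; the edge `xy'` keeps the length of `xy` and the new edge `yy'` has length `ε`.
`U'₁` consists of `y'` together with the vertices of `U₁` in the component of `T − y`
containing `x` (those `u` whose path to `x` avoids `y`); all other data is unchanged. -/
theorem expansion_preserves_solution
    {V : Type*} [Fintype V] (T : SimpleGraph V) (hT : T.IsTree)
    (w : Sym2 V → ℝ) (hw : ∀ e ∈ T.edgeSet, 0 < w e)
    (d : V → V → ℝ)
    (hd : ∀ (u v : V) (p : T.Walk u v), p.IsPath → (p.edges.map w).sum = d u v)
    (k : ℕ) (U S : Fin k → Set V)
    (hcover : (⋃ i, U i) = Set.univ)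
    (i₀ : Fin k) (x y : V) (hxy : T.Adj x y)
    (hx : x ∈ U i₀ \ ⋃ (j) (_ : j ≠ i₀), U j)
    (hyU : y ∈ U i₀) (hyW : y ∉ U i₀ \ ⋃ (j) (_ : j ≠ i₀), U j)
    (ε : ℝ) (hε : 0 < ε)
    -- the expanded tree `T'`
    (T' : SimpleGraph (V ⊕ Unit))
    (hT'adj : ∀ a b : V ⊕ Unit, T'.Adj a b ↔
      ((∃ u v : V, a = Sum.inl u ∧ b = Sum.inl v ∧ T.Adj u v ∧ s(u, v) ≠ s(x, y)) ∨
        (a = Sum.inl x ∧ b = Sum.inr ()) ∨ (a = Sum.inr () ∧ b = Sum.inl x) ∨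
        (a = Sum.inl y ∧ b = Sum.inr ()) ∨ (a = Sum.inr () ∧ b = Sum.inl y)))
    -- its edge-lengths
    (w' : Sym2 (V ⊕ Unit) → ℝ)
    (hw'old : ∀ u v : V, w' s(Sum.inl u, Sum.inl v) = w s(u, v))
    (hw'x : w' s(Sum.inl x, Sum.inr ()) = w s(x, y))
    (hw'y : w' s(Sum.inl y, Sum.inr ()) = ε)
    -- its tree distance
    (d' : V ⊕ Unit → V ⊕ Unit → ℝ)
    (hd' : ∀ (a b : V ⊕ Unit) (p : T'.Walk a b), p.IsPath → (p.edges.map w').sum = d' a b)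
    -- the modified cell `U'₁`
    (U₁' : Set (V ⊕ Unit))
    (hU₁' : U₁' = {Sum.inr ()} ∪
      Sum.inl '' {u | u ∈ U i₀ ∧ ∀ p : T.Walk u x, p.IsPath → y ∉ p.support})
    -- a solution of the original instance `I`
    (st : Fin k → V)
    (hsol : ∀ i, st i ∈ S i ∧ {v | ∀ j, d (st i) v ≤ d (st j) v} = U i) :
    ∀ i, (Sum.inl (st i) : V ⊕ Unit) ∈ (Sum.inl '' S i : Set (V ⊕ Unit)) ∧
      {a : V ⊕ Unit | ∀ j, d' (Sum.inl (st i)) a ≤ d' (Sum.inl (st j)) a} =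
        (if i = i₀ then U₁' else (Sum.inl '' U i : Set (V ⊕ Unit))) :=
  expansion_preserves_solution_general T hT w hw d hd k U S i₀ x y hxy hx hyU hyW ε hε T' hT'adj w'
    hw'old hw'x hw'y d' hd' U₁' hU₁' st hsol
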